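/- In any term T_n (n ≥ 1) of the look-and-say-again sequence with seed d ∈ {1,2,4,6}, the digit 3 never appears, and no run has length exceeding 6. -/

import Mathlib

/-! LSA is the classical look-and-say step `a₁^n₁ a₂^n₂ ⋯ ↦ n₁ a₁ n₂ a₂ ⋯` followed by doubling
every digit, so the runs of `LSA(T)` are those of the look-and-say string with doubled lengths.
If all bases and run lengths of `T` lie in `{1,2,4,6}`, the look-and-say string uses only these
digits and has no run of length 4, because any four consecutive entries contain two adjacent
bases `aᵢ ≠ aᵢ₊₁`. Hence every run of `LSA(T)` has base in `{1,2,4,6}` and length in `{2,4,6}`;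
this property is therefore preserved by LSA, it holds for `LSA(d)`, and it excludes the digit 3
and runs longer than 6. -/

/-- Run-length encoding of a digit string (a list of digits). -/
def rle : List ℕ → List (ℕ × ℕ)
  | [] => []
  | a :: t =>
    match rle t with
    | [] => [(a, 1)]
    | (b, n) :: r => if a = b then (a, n + 1) :: r else (a, 1) :: (b, n) :: r

/-- `P` is a run-length representation of the digit string `S`:
multiplicities are positive, adjacent base digits are distinct, and `S` is
the concatenation of the runs. -/
def IsRLE (S : List ℕ) (P : List (ℕ × ℕ)) : Prop :=
  (∀ p ∈ P, 1 ≤ p.2) ∧ List.Chain' (fun p q => p.1 ≠ q.1) P ∧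
    S = (P.map fun p => List.replicate p.2 p.1).flatten

/-- The look-and-say-again step: each run `a^n` is read off as `n n a a`. -/
def lsa (T : List ℕ) : List ℕ := (rle T).flatMap fun p => [p.2, p.2, p.1, p.1]

/-- Property `P`: every run has base digit in `{1,2,4,6}` and length in `{2,4,6}`. -/
def propP (T : List ℕ) : Prop :=
  ∀ p ∈ rle T, p.1 ∈ ({1, 2, 4, 6} : Set ℕ) ∧ p.2 ∈ ({2, 4, 6} : Set ℕ)

theorem rle_singleton (a : ℕ) : rle [a] = [(a, 1)] := rfl

theorem rle_cons_of_eq {t : List ℕ} {b m : ℕ} {r : List (ℕ × ℕ)} (h : rle t = (b, m) :: r) :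
    rle (b :: t) = (b, m + 1) :: r := by
  simp [rle, h]

theorem rle_cons_of_ne {t : List ℕ} {a b m : ℕ} {r : List (ℕ × ℕ)} (h : rle t = (b, m) :: r)
    (hab : a ≠ b) : rle (a :: t) = (a, 1) :: (b, m) :: r := by
  simp [rle, h, hab]

theorem isRLE_rle (T : List ℕ) : IsRLE T (rle T) := by
  induction T with
  | nil => exact ⟨by simp [rle], List.IsChain.nil, rfl⟩
  | cons x t ih =>
    have hchain : (rle t).IsChain (fun p q => p.1 ≠ q.1) := ih.2.1
    obtain ⟨hpos, -, hflat⟩ := ih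
    rcases hr : rle t with _ | ⟨⟨b, m⟩, r⟩
    · obtain rfl : t = [] := by simpa [hr] using hflat
      exact ⟨by simp [rle_singleton], List.isChain_singleton _, rfl⟩
    rw [hr] at hpos hchain hflat
    by_cases hxb : x = b
    · subst hxb
      rw [rle_cons_of_eq hr]
      exact ⟨List.forall_mem_cons.mpr ⟨Nat.le_add_left 1 m, (List.forall_mem_cons.mp hpos).2⟩,
        List.isChain_cons.mpr (List.isChain_cons.mp hchain),
        by simp [hflat, List.replicate_succ]⟩
    · rw [rle_cons_of_ne hr hxb]
      exact ⟨by simpa using hpos, List.isChain_cons_cons.mpr ⟨hxb, hchain⟩, by simp [hflat]⟩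

theorem mem_iff_exists_mem_rle {T : List ℕ} {x : ℕ} : x ∈ T ↔ ∃ n, (x, n) ∈ rle T := by
  obtain ⟨hpos, -, hflat⟩ := isRLE_rle T
  conv_lhs => rw [hflat]
  simp only [List.mem_flatten, List.mem_map, Prod.exists, ↓existsAndEq, and_true, List.mem_replicate,
    ne_eq]
  exact ⟨fun ⟨n, hn, _⟩ => ⟨n, hn⟩, fun ⟨n, hn⟩ => ⟨n, hn, Nat.one_le_iff_ne_zero.mp (hpos _ hn)⟩⟩

theorem replicate_infix_of_mem_rle {T : List ℕ} {p : ℕ × ℕ} (hp : p ∈ rle T) :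
    List.replicate p.2 p.1 <:+: T := by
  obtain ⟨-, -, hflat⟩ := isRLE_rle T
  rw [hflat]
  exact List.infix_of_mem_flatten (List.mem_map_of_mem hp)

theorem rle_flatMap_dup (L : List ℕ) :
    rle (L.flatMap fun x => [x, x]) = (rle L).map fun p => (p.1, 2 * p.2) := by
  induction L with
  | nil => rfl
  | cons x t ih =>
    rcases hr : rle t with _ | ⟨⟨b, m⟩, r⟩
    · obtain rfl : t = [] := by simpa [hr] using (isRLE_rle t).2.2
      simp [rle]
    rw [hr] at ih
    simp only [List.flatMap_cons, List.cons_append, List.nil_append]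
    by_cases hxb : x = b
    · subst hxb
      rw [rle_cons_of_eq (rle_cons_of_eq ih), rle_cons_of_eq hr]
      simp [Nat.mul_succ]
    · rw [rle_cons_of_eq (rle_cons_of_ne ih hxb), rle_cons_of_ne hr hxb]
      simp

def lookAndSay (T : List ℕ) : List ℕ := (rle T).flatMap fun p => [p.2, p.1]

theorem lsa_eq_flatMap_dup (T : List ℕ) : lsa T = (lookAndSay T).flatMap fun x => [x, x] := by
  simp [lsa, lookAndSay, List.flatMap_assoc]

theorem not_replicate_four_infix_flatMap {x : ℕ} :
    ∀ {P : List (ℕ × ℕ)}, P.IsChain (fun p q => p.1 ≠ q.1) →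
      ¬ List.replicate 4 x <:+: P.flatMap fun p => [p.2, p.1]
  | [], _, h => by simpa using h.length_le
  | [_], _, h => by simpa using h.length_le
  | p :: q :: P, hP, h => by
    obtain ⟨hpq, hqP⟩ := List.isChain_cons_cons.mp hP
    change List.replicate 4 x <:+: p.2 :: p.1 :: (q :: P).flatMap (fun p => [p.2, p.1]) at h
    rw [List.infix_cons_iff, List.infix_cons_iff] at h
    rcases h with h | h | h
    all_goals simp only [List.replicate_succ, List.replicate_zero, List.flatMap_cons, List.cons_append,
      List.nil_append, List.cons_prefix_cons] at h
    · exact hpq (h.2.1.symm.trans h.2.2.2.1)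
    · exact hpq (h.1.symm.trans h.2.2.1)
    · exact not_replicate_four_infix_flatMap hqP h

theorem snd_le_of_forall_not_replicate_infix {T : List ℕ} {k : ℕ}
    (hT : ∀ x, ¬ List.replicate (k + 1) x <:+: T) {p : ℕ × ℕ} (hp : p ∈ rle T) : p.2 ≤ k := by
  by_contra! hk
  exact hT p.1 ((List.infix_replicate_iff.mpr ⟨by simpa using hk, by simp⟩).trans
    (replicate_infix_of_mem_rle hp))

theorem propP_lsa_of_forall_mem_lookAndSay {T : List ℕ}
    (hT : ∀ x ∈ lookAndSay T, x ∈ ({1, 2, 4, 6} : Set ℕ)) : propP (lsa T) := by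
  intro q hq
  rw [lsa_eq_flatMap_dup, rle_flatMap_dup, List.mem_map] at hq
  obtain ⟨⟨a, k⟩, hak, rfl⟩ := hq
  have hk₁ : 1 ≤ k := (isRLE_rle _).1 _ hak
  have hk₃ : k ≤ 3 := snd_le_of_forall_not_replicate_infix
    (fun _ => not_replicate_four_infix_flatMap (isRLE_rle T).2.1) hak
  refine ⟨hT a (mem_iff_exists_mem_rle.mpr ⟨k, hak⟩), ?_⟩
  interval_cases k <;> simp

theorem forall_mem_lookAndSay_of_propP {T : List ℕ} (hT : propP T) :
    ∀ x ∈ lookAndSay T, x ∈ ({1, 2, 4, 6} : Set ℕ) := by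
  intro x hx
  simp only [lookAndSay, List.mem_flatMap, List.mem_cons, List.not_mem_nil, or_false] at hx
  obtain ⟨p, hp, rfl | rfl⟩ := hx
  · have := (hT p hp).2
    simp only [Set.mem_insert_iff, Set.mem_singleton_iff] at this ⊢
    omega
  · exact (hT p hp).1

theorem propP_lsa {T : List ℕ} (hT : propP T) : propP (lsa T) :=
  propP_lsa_of_forall_mem_lookAndSay (forall_mem_lookAndSay_of_propP hT)

theorem propP_iterate_lsa {d : ℕ} (hd : d ∈ ({1, 2, 4, 6} : Set ℕ)) {n : ℕ} (hn : 1 ≤ n) :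
    propP (lsa^[n] [d]) := by
  induction n, hn using Nat.le_induction with
  | base => exact propP_lsa_of_forall_mem_lookAndSay (by simpa [lookAndSay, rle_singleton] using hd)
  | succ n _ ih => exact (Function.iterate_succ_apply' lsa n [d]) ▸ propP_lsa ih

/-- For seeds in `{1,2,4,6}`, the digit 3 never appears in any term `T_n`
with `n ≥ 1`, and no run of such a term has length exceeding 6. -/
theorem lsa_seq_no_three (d : ℕ) (hd : d ∈ ({1, 2, 4, 6} : Set ℕ)) :
    ∀ n : ℕ, 1 ≤ n →
      3 ∉ lsa^[n] [d] ∧ ∀ p ∈ rle (lsa^[n] [d]), p.2 ≤ 6 := by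
  intro n hn
  have hP := propP_iterate_lsa hd hn
  refine ⟨fun h₃ => ?_, fun p hp => ?_⟩
  · obtain ⟨m, hm⟩ := mem_iff_exists_mem_rle.mp h₃
    simpa using (hP _ hm).1
  · have := (hP p hp).2
    simp only [Set.mem_insert_iff, Set.mem_singleton_iff] at this
    omega
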